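/- arXiv:2111.08949 — 7 statements merged into one kernel-verified Lean document; each statement's English description precedes it below -/
import Mathlib

section
/- For every n ∈ ℕ and every infinite subset M ⊆ ℝ^n equipped with the max-norm metric, χ(ℝ^n_∞, M) ≤ n+1; that is, there exists a colouring of ℝ^n with n+1 colours such that no colour class contains an isometric copy of M. -/
open Set Filter

/-- The set `A` (in the metric space `β`) contains an isometric copy of the
metric (sub)space `M` (a subset of the metric space `α`). -/
def HasCopy {α β : Type*} [MetricSpace α] [MetricSpace β] (M : Set α) (A : Set β) : Prop :=
  ∃ f : α → β, (∀ x ∈ M, ∀ y ∈ M, dist (f x) (f y) = dist x y) ∧ f '' M ⊆ A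

/-!
By Ramsey's theorem for pairs, an infinite `M ⊆ ℝⁿ_∞` contains a geodesic sequence: points
`y k` and reals `D 0 < D 1 < ⋯` with `dist (y k) (y j) = D j - D k` for `k ≤ j` (all these
distances realised in one coordinate, with one orientation). Conversely, every geodesic sequence
of `ℝⁿ_∞` has a coordinate equal to `a + D k` or to `a - D k`: the coordinate realising
`dist (w 0) (w j)` is forced to be affine in `D` on `[0, j]`, and one coordinate serves infinitely
many `j`. Colour `ℝ` by `γ` so that every translate `a ± D` meets all `n + 1` colours; this is
possible because the translates fall into cosets of a countable group, each holding countably many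
of them, and countably many infinite sets can be met by pairwise distinct points. Give `z ∈ ℝⁿ` a
colour missing from `γ (z 0), …, γ (z (n - 1))`. An isometric copy of `M` inside one colour class
carries a geodesic sequence with a coordinate running through some `a ± D`, which meets the colour
of that class.
-/

open Function

theorem Ultrafilter.exists_eventually_eq {α C : Type*} [Finite C] (U : Ultrafilter α) (g : α → C) :
    ∃ c, ∀ᶠ x in U, g x = c := by
  obtain ⟨c, hc⟩ := (U.map g).eq_pure_of_finite
  have : ({c} : Set C) ∈ U.map g := hc ▸ Ultrafilter.mem_pure.mpr rfl
  exact ⟨c, Ultrafilter.mem_map.mp this⟩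

theorem exists_strictMono_monochromatic {C : Type*} [Finite C] (col : ℕ → ℕ → C) :
    ∃ φ : ℕ → ℕ, StrictMono φ ∧ ∃ c, ∀ k j, k < j → col (φ k) (φ j) = c := by
  let U := hyperfilter ℕ
  choose c hc using fun a => U.exists_eventually_eq (col a)
  obtain ⟨c₀, hc₀⟩ := U.exists_eventually_eq c
  obtain ⟨φ, -, hφ⟩ := exists_seq_of_forall_finset_exists (fun a => c a = c₀)
    (fun a b => a < b ∧ col a b = c₀) fun s hs =>
      (hc₀.and <| (eventually_all_finset s).2 fun a ha =>
        ((eventually_gt_atTop a).filter_mono Nat.hyperfilter_le_atTop).and (hs a ha ▸ hc a)).exists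
  exact ⟨φ, fun k j h => (hφ k j h).1, c₀, fun k j h => (hφ k j h).2⟩

def IsGeodesicSeq {X : Type*} [PseudoMetricSpace X] (w : ℕ → X) (D : ℕ → ℝ) : Prop :=
  ∀ k j, k ≤ j → dist (w k) (w j) = D j - D k

theorem exists_dist_eq_dist_apply {β : Type*} {X : β → Type*} [Fintype β] [Nonempty β]
    [∀ b, PseudoMetricSpace (X b)] (f g : ∀ b, X b) : ∃ b, dist f g = dist (f b) (g b) := by
  obtain ⟨b, -, hb⟩ := Finset.exists_mem_eq_sup Finset.univ Finset.univ_nonempty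
    fun b => nndist (f b) (g b)
  exact ⟨b, by rw [dist_pi_def, hb, dist_nndist]⟩

theorem IsGeodesicSeq.exists_coord_eq {ι : Type*} [Fintype ι] [Nonempty ι] {w : ℕ → ι → ℝ}
    {D : ℕ → ℝ} (hw : IsGeodesicSeq w D) :
    ∃ i a, (∀ k, w k i = a + D k) ∨ ∀ k, w k i = a - D k := by
  have hcoord : ∀ i k j, k ≤ j → |w k i - w j i| ≤ D j - D k := fun i k j h => by
    rw [← hw k j h, ← Real.dist_eq]
    exact dist_le_pi_dist _ _ i
  -- the coordinate realising `dist (w 0) (w j)` is forced to be affine in `D` up to `j`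
  have hstage : ∀ j, ∃ i, (∀ k ≤ j, w k i = w 0 i + (D k - D 0)) ∨
      ∀ k ≤ j, w k i = w 0 i - (D k - D 0) := by
    intro j
    obtain ⟨i, hi⟩ := exists_dist_eq_dist_apply (w 0) (w j)
    rw [hw 0 j j.zero_le, Real.dist_eq] at hi
    refine ⟨i, (abs_cases (w 0 i - w j i)).symm.imp (fun h k hk => ?_) fun h k hk => ?_⟩ <;>
    · have h₁ := abs_le.mp (hcoord i 0 k k.zero_le)
      have h₂ := abs_le.mp (hcoord i k j hk)
      linarith
  obtain ⟨i, h | h⟩ : ∃ i, (∃ᶠ j in atTop, ∀ k ≤ j, w k i = w 0 i + (D k - D 0)) ∨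
      ∃ᶠ j in atTop, ∀ k ≤ j, w k i = w 0 i - (D k - D 0) := by
    simpa only [frequently_exists, frequently_or_distrib] using Frequently.of_forall hstage
  · refine ⟨i, w 0 i - D 0, Or.inl fun k => ?_⟩
    obtain ⟨j, hkj, hj⟩ := frequently_atTop.mp h k
    linarith [hj k hkj]
  · refine ⟨i, w 0 i + D 0, Or.inr fun k => ?_⟩
    obtain ⟨j, hkj, hj⟩ := frequently_atTop.mp h k
    linarith [hj k hkj]

theorem exists_isGeodesicSeq_of_infinite {ι : Type*} [Fintype ι] [Nonempty ι]
    {M : Set (ι → ℝ)} (hM : M.Infinite) :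
    ∃ y : ℕ → ι → ℝ, (∀ k, y k ∈ M) ∧ ∃ D, StrictMono D ∧ IsGeodesicSeq y D := by
  let x : ℕ → ι → ℝ := fun k => hM.natEmbedding M k
  have hx : Injective x := Subtype.val_injective.comp (hM.natEmbedding M).injective
  choose I hI using fun k j => exists_dist_eq_dist_apply (x k) (x j)
  -- Ramsey, colouring a pair by the coordinate realising its distance and its orientation there
  obtain ⟨φ, hφ, ⟨i, b⟩, hcol⟩ := exists_strictMono_monochromatic fun k j =>
    (I k j, decide (x k (I k j) ≤ x j (I k j)))
  let D : ℕ → ℝ := fun k => if b then x (φ k) i else -x (φ k) i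
  have hchain : ∀ k j, k < j → dist (x (φ k)) (x (φ j)) = D j - D k := by
    intro k j hkj
    have hIi : I (φ k) (φ j) = i := congrArg Prod.fst (hcol k j hkj)
    have hb := congrArg Prod.snd (hcol k j hkj)
    simp only [hIi] at hb
    rw [hI, hIi, Real.dist_eq]
    cases b
    · rw [abs_of_pos (sub_pos.mpr (not_le.mp (of_decide_eq_false hb)))]
      simp only [D, Bool.false_eq_true, if_false]
      ring
    · rw [abs_of_nonpos (sub_nonpos.mpr (of_decide_eq_true hb))]
      simp only [D, if_true]
      ring
  have hD : StrictMono D := fun k j hkj => by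
    have := dist_pos.mpr (hx.ne (hφ.injective.ne hkj.ne))
    linarith [hchain k j hkj]
  refine ⟨x ∘ φ, fun k => (hM.natEmbedding M (φ k)).2, D, hD, fun k j hkj => ?_⟩
  rcases hkj.lt_or_eq with h | rfl
  exacts [hchain k j h, by simp]

theorem exists_injective_forall_mem {α : Type*} {S : ℕ → Set α} (hS : ∀ m, (S m).Infinite) :
    ∃ p : ℕ → α, Injective p ∧ ∀ m, p m ∈ S m := by
  classical
  choose next hnext_mem hnext_fresh using fun m (F : Finset α) => (hS m).exists_notMem_finset F
  let F : ℕ → Finset α := fun m => Nat.rec ∅ (fun m F => insert (next m F) F) m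
  have hF : Monotone F := monotone_nat_of_le_succ fun m => Finset.subset_insert _ _
  have hne : ∀ k j, k < j → next k (F k) ≠ next j (F j) := fun k j hkj h =>
    hnext_fresh j (F j) (h ▸ hF hkj (Finset.mem_insert_self _ _))
  refine ⟨fun m => next m (F m), fun k j h => ?_, fun m => hnext_mem m _⟩
  by_contra hkj
  rcases lt_or_gt_of_ne hkj with hkj | hkj
  exacts [hne k j hkj h, hne j k hkj h.symm]

theorem exists_surjOn_of_countable {α ι C : Type*} [Countable ι] [Countable C] [Nonempty C]
    (S : ι → Set α) (hS : ∀ i, (S i).Infinite) :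
    ∃ γ : α → C, ∀ i, SurjOn γ (S i) univ := by
  cases isEmpty_or_nonempty ι
  · exact ⟨fun _ => Classical.arbitrary C, isEmptyElim⟩
  obtain ⟨e, he⟩ := exists_surjective_nat (ι × C)
  obtain ⟨p, hp, hpS⟩ := exists_injective_forall_mem fun m => hS (e m).1
  refine ⟨extend p (fun m => (e m).2) fun _ => Classical.arbitrary C, fun i c _ => ?_⟩
  obtain ⟨m, hm⟩ := he (i, c)
  exact ⟨p m, by simpa [hm] using hpS m, by rw [hp.extend_apply, hm]⟩

theorem AddSubgroup.countable_closure_range {A ι : Type*} [AddCommGroup A] [Countable ι]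
    (f : ι → A) : Countable (closure (range f)) := by
  refine ((countable_range fun a : ι →₀ ℤ => a.sum fun i n => n • f i).mono
    fun x hx => ?_).to_subtype
  obtain ⟨a, rfl⟩ := exists_finsupp_of_mem_closure_range f x hx
  exact ⟨a, rfl⟩

theorem exists_colouring_translates {A ι C : Type*} [AddCommGroup A] [Countable ι] [Countable C]
    [Nonempty C] (s : ι → ℕ → A) (hs : ∀ i, Injective (s i)) :
    ∃ γ : A → C, ∀ a i c, ∃ k, γ (a + s i k) = c := by
  let G := AddSubgroup.closure (range (uncurry s))
  have := AddSubgroup.countable_closure_range (uncurry s)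
  have hsG : ∀ i k, s i k ∈ G := fun i k => AddSubgroup.subset_closure ⟨(i, k), rfl⟩
  -- `a + s i k` stays in the coset of `a` modulo the countable group `G`: colour cosets separately
  choose γ hγ using fun q : A ⧸ G => exists_surjOn_of_countable (C := C)
    (fun gi : G × ι => range fun k => q.out + gi.1 + s gi.2 k)
    fun gi => infinite_range_of_injective ((add_right_injective _).comp (hs gi.2))
  refine ⟨fun x => γ x x, fun a i c => ?_⟩
  obtain ⟨g, hg⟩ := QuotientAddGroup.mk_out_eq_add G a
  obtain ⟨-, ⟨k, rfl⟩, hk⟩ := hγ a (-g, i) (mem_univ c)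
  refine ⟨k, ?_⟩
  simpa [QuotientAddGroup.mk_add_of_mem a (hsG i k), hg] using hk

/-- For every infinite `M ⊆ ℝ^n_∞` there is a colouring of `ℝ^n` (max metric) with
`n+1` colours such that no colour class contains an isometric copy of `M`;
that is, `χ(ℝ^n_∞, M) ≤ n+1`. -/
theorem chi_infinite_le (n : ℕ) (M : Set (Fin n → ℝ)) (hM : M.Infinite) :
    ∃ c : (Fin n → ℝ) → Fin (n + 1), ∀ i : Fin (n + 1), ¬ HasCopy M {x | c x = i} := by
  have : Nonempty (Fin n) := by
    by_contra h
    have := not_nonempty_iff.mp h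
    exact hM M.toFinite
  obtain ⟨y, hyM, D, hD, hyD⟩ := exists_isGeodesicSeq_of_infinite hM
  obtain ⟨γ, hγ⟩ := exists_colouring_translates (C := Fin (n + 1))
    (fun b : Bool => if b then D else -D) fun b => by
      cases b
      exacts [neg_injective.comp hD.injective, hD.injective]
  have hmiss : ∀ z : Fin n → ℝ, ∃ v, ∀ i, γ (z i) ≠ v := fun z => by
    by_contra! h
    simpa using Fintype.card_le_of_surjective _ h
  choose c hc using hmiss
  refine ⟨c, fun v ⟨f, hf, hfv⟩ => ?_⟩
  have hw : IsGeodesicSeq (f ∘ y) D := fun k j hkj =>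
    (hf _ (hyM k) _ (hyM j)).trans (hyD k j hkj)
  obtain ⟨i, a, hfy⟩ := hw.exists_coord_eq
  obtain ⟨k, hk⟩ : ∃ k, γ (f (y k) i) = v := by
    rcases hfy with h | h
    · obtain ⟨k, hk⟩ := hγ a true v
      exact ⟨k, by rw [show f (y k) i = a + D k from h k]; simpa using hk⟩
    · obtain ⟨k, hk⟩ := hγ a false v
      exact ⟨k, by rw [show f (y k) i = a - D k from h k]; simpa [sub_eq_add_neg] using hk⟩
  exact hc (f (y k)) i (hk.trans (hfv ⟨y k, hyM k, rfl⟩).symm)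
end

section
/- Let M be an integer metric space, i.e., a metric space in which all pairwise distances between distinct points are positive integers. Then for all n ∈ ℕ, χ(ℝ^n_∞, M) = χ(ℤ^n_∞, M), where ℤ^n_∞ is ℤ^n equipped with the max-norm metric. -/
open Set

/-! A colouring pulls back along any map that sends isometric copies of `M` to isometric
copies of `M`. The inclusion `ℤ^n ⊆ ℝ^n` is such a map, and so is the coordinatewise floor
`ℝ^n → ℤ^n`, because all distances in a copy of `M` are integers: reals at distance exactly `m`
have floors at distance `m`, and reals at distance at most `m` have floors at distance less than
`m + 1`, hence at most `m`. -/

theorem Int.dist_floor_floor_le {a b : ℝ} {m : ℕ} (h : dist a b ≤ m) : dist ⌊a⌋ ⌊b⌋ ≤ m := by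
  rw [Real.dist_eq, abs_le] at h
  have hreal : |(⌊a⌋ : ℝ) - ⌊b⌋| < m + 1 := by
    rw [abs_sub_lt_iff]
    constructor <;>
      linarith [Int.floor_le a, Int.lt_floor_add_one a, Int.floor_le b, Int.lt_floor_add_one b]
  have hint : |⌊a⌋ - ⌊b⌋| < (m : ℤ) + 1 := by exact_mod_cast hreal
  rw [Int.dist_eq]
  exact_mod_cast Int.lt_add_one_iff.1 hint

theorem Int.dist_floor_floor_of_dist_eq {a b : ℝ} {m : ℕ} (h : dist a b = m) :
    dist ⌊a⌋ ⌊b⌋ = m := by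
  rw [Real.dist_eq, abs_eq (Nat.cast_nonneg m)] at h
  rcases h with h | h
  · rw [show a = b + m by linarith, Int.floor_add_natCast, Int.dist_eq]
    simp
  · rw [show b = a + m by linarith, Int.floor_add_natCast, Int.dist_eq]
    simp

section Pi

variable {ι : Type*} [Fintype ι]

theorem dist_floor_pi_of_dist_eq {x y : ι → ℝ} {m : ℕ} (h : dist x y = m) :
    dist (fun i => ⌊x i⌋) (fun i => ⌊y i⌋) = m := by
  rcases m.eq_zero_or_pos with rfl | hm
  · rw [Nat.cast_zero, dist_eq_zero] at h ⊢
    rw [h]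
  · have hm : (0 : ℝ) < m := by exact_mod_cast hm
    obtain ⟨⟨i, hi⟩, hle⟩ := (dist_pi_eq_iff hm).1 h
    exact (dist_pi_eq_iff hm).2
      ⟨⟨i, Int.dist_floor_floor_of_dist_eq hi⟩, fun j => Int.dist_floor_floor_le (hle j)⟩

theorem Isometry.floor_pi {M : Type*} [PseudoMetricSpace M]
    (hM : ∀ p q : M, ∃ m : ℕ, dist p q = m) {f : M → ι → ℝ} (hf : Isometry f) :
    Isometry fun p i => ⌊f p i⌋ :=
  Isometry.of_dist_eq fun p q => by
    obtain ⟨m, hm⟩ := hM p q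
    rw [hm]
    exact dist_floor_pi_of_dist_eq ((hf.dist_eq p q).trans hm)

end Pi

section Colouring

variable (M : Type*) [PseudoMetricSpace M] {X Y α : Type*} [PseudoMetricSpace X]
  [PseudoMetricSpace Y]

def IsCopyFreeColouring (c : X → α) : Prop :=
  ∀ i, ¬ ∃ f : M → X, Isometry f ∧ range f ⊆ {x | c x = i}

variable {M}

theorem IsCopyFreeColouring.comp {c : Y → α} (hc : IsCopyFreeColouring M c) {g : X → Y}
    (hg : ∀ f : M → X, Isometry f → Isometry (g ∘ f)) : IsCopyFreeColouring M (c ∘ g) := by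
  rintro i ⟨f, hf, hrange⟩
  refine hc i ⟨g ∘ f, hg f hf, ?_⟩
  rintro _ ⟨p, rfl⟩
  exact hrange ⟨p, rfl⟩

end Colouring

/-- For an integer metric space `M` (all pairwise distances between distinct points are
positive integers), the chromatic numbers of `ℝ^n` and `ℤ^n` (both with the max-norm
metric) with forbidden subspace `M` coincide. -/
theorem chi_real_eq_chi_int (M : Type*) [MetricSpace M]
    (hM : ∀ x y : M, x ≠ y → ∃ m : ℕ, 0 < m ∧ dist x y = (m : ℝ)) (n : ℕ) :
    sInf {N : ℕ | ∃ c : (Fin n → ℝ) → Fin N, ∀ i : Fin N,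
        ¬ ∃ f : M → (Fin n → ℝ), Isometry f ∧ Set.range f ⊆ {x | c x = i}}
  = sInf {N : ℕ | ∃ c : (Fin n → ℤ) → Fin N, ∀ i : Fin N,
        ¬ ∃ f : M → (Fin n → ℤ), Isometry f ∧ Set.range f ⊆ {x | c x = i}} := by
  have hdist : ∀ p q : M, ∃ m : ℕ, dist p q = m := fun p q => by
    by_cases hpq : p = q
    · exact ⟨0, by simp [hpq]⟩
    · exact (hM p q hpq).imp fun _ => And.right
  have hcast : Isometry fun (x : Fin n → ℤ) (i : Fin n) => (x i : ℝ) :=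
    (Isometry.of_dist_eq Int.dist_cast_real).postcomp_pi
  congr 1
  ext N
  change (∃ c, IsCopyFreeColouring M c) ↔ ∃ c, IsCopyFreeColouring M c
  constructor
  · rintro ⟨c, hc⟩
    exact ⟨c ∘ fun x i => (x i : ℝ), hc.comp fun _ hf => hcast.comp hf⟩
  · rintro ⟨c, hc⟩
    exact ⟨c ∘ fun x i => ⌊x i⌋, hc.comp fun _ hf => hf.floor_pi hdist⟩
end

section
/- Let k ∈ ℕ, let λ_1, …, λ_k be positive reals, and set B = B(λ_1,…,λ_k). Then for all n ∈ ℕ and all subsets A ⊆ ℝ, the Cartesian power A^n ⊆ ℝ^n (with the max-norm metric) contains no isometric copy of B if and only if A is B-tr-free, i.e., A contains neither B+x nor −B+x for any x ∈ ℝ. -/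
open Set Filter

/-- The baton `B(λ₁,…,λ_k)`: the set of partial sums `σ₀,…,σ_k` of `λ₁,…,λ_k`. -/
noncomputable def baton (lam : ℕ → ℝ) (k : ℕ) : Set ℝ :=
  (fun r => ∑ j ∈ Finset.range r, lam j) '' Set.Iic k

/-!
A copy of a set `M ⊆ ℝ` with least element `a` and greatest element `b` in `A^n` under the
max metric realises the distance `b - a` between the images of `a` and `b` in a single
coordinate. Projected to that coordinate the copy stays 1-Lipschitz, and since every
`x ∈ M` lies between `a` and `b` the triangle inequality through `x` is an equality, which
forces the projection to be `x ↦ ±x + c` on `M`. Hence `A` itself contains `M + c` or `-M + c`;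
conversely such a translate embeds diagonally into `A^n`.
-/

lemma exists_dist_apply_eq_dist {ι : Type*} [Fintype ι] [Nonempty ι] {X : ι → Type*}
    [∀ i, PseudoMetricSpace (X i)] (f g : ∀ i, X i) : ∃ i, dist (f i) (g i) = dist f g := by
  obtain ⟨i, -, hi⟩ := Finset.exists_mem_eq_sup Finset.univ Finset.univ_nonempty
    fun i => nndist (f i) (g i)
  exact ⟨i, by rw [dist_nndist, dist_nndist, nndist_pi_def, hi]⟩

lemma exists_eqOn_add_or_eqOn_neg_add {M : Set ℝ} {a b : ℝ} (ha : IsLeast M a)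
    (hb : IsGreatest M b) {g : ℝ → ℝ} (hg : ∀ x ∈ M, ∀ y ∈ M, |g x - g y| ≤ |x - y|)
    (hab : |g b - g a| = b - a) :
    ∃ c, EqOn g (fun s => s + c) M ∨ EqOn g (fun s => -s + c) M := by
  have bound (x) (hx : x ∈ M) : |g x - g a| ≤ x - a ∧ |g b - g x| ≤ b - x := by
    have hxa := hg x hx a ha.1
    have hbx := hg b hb.1 x hx
    rw [abs_of_nonneg (sub_nonneg.2 (ha.2 hx))] at hxa
    rw [abs_of_nonneg (sub_nonneg.2 (hb.2 hx))] at hbx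
    exact ⟨hxa, hbx⟩
  rcases (abs_eq (sub_nonneg.2 (ha.2 hb.1))).1 hab with hinc | hdec
  · refine ⟨g a - a, Or.inl fun x hx => ?_⟩
    obtain ⟨h₁, h₂⟩ := bound x hx
    linarith [(abs_le.1 h₁).2, (abs_le.1 h₂).2]
  · refine ⟨g a + a, Or.inr fun x hx => ?_⟩
    obtain ⟨h₁, h₂⟩ := bound x hx
    linarith [(abs_le.1 h₁).1, (abs_le.1 h₂).1]

lemma HasCopy.pi_const {α β ι : Type*} [MetricSpace α] [MetricSpace β] [Fintype ι] [Nonempty ι]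
    {M : Set α} {A : Set β} (h : HasCopy M A) : HasCopy M {x : ι → β | ∀ i, x i ∈ A} := by
  obtain ⟨f, hf, hfA⟩ := h
  refine ⟨fun s _ => f s, fun x hx y hy => ?_, ?_⟩
  · rw [dist_pi_const, hf x hx y hy]
  · rintro _ ⟨s, hs, rfl⟩ i
    exact hfA (mem_image_of_mem f hs)

lemma hasCopy_of_translate_subset {M A : Set ℝ} {c : ℝ}
    (h : (fun s => s + c) '' M ⊆ A ∨ (fun s => -s + c) '' M ⊆ A) : HasCopy M A := by
  rcases h with h | h <;> exact ⟨_, fun x _ y _ => by simp [Real.dist_eq], h⟩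

lemma HasCopy.exists_translate_subset_of_pi {ι : Type*} [Fintype ι] [Nonempty ι]
    {M A : Set ℝ} {a b : ℝ} (ha : IsLeast M a) (hb : IsGreatest M b)
    (h : HasCopy M {x : ι → ℝ | ∀ i, x i ∈ A}) :
    ∃ c, (fun s => s + c) '' M ⊆ A ∨ (fun s => -s + c) '' M ⊆ A := by
  obtain ⟨f, hf, hfA⟩ := h
  obtain ⟨i, hi⟩ := exists_dist_apply_eq_dist (f b) (f a)
  have hlip (x) (hx : x ∈ M) (y) (hy : y ∈ M) : |f x i - f y i| ≤ |x - y| := by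
    simpa only [Real.dist_eq, hf x hx y hy] using dist_le_pi_dist (f x) (f y) i
  have hext : |f b i - f a i| = b - a := by
    rw [← Real.dist_eq, hi, hf b hb.1 a ha.1, Real.dist_eq,
      abs_of_nonneg (sub_nonneg.2 (ha.2 hb.1))]
  obtain ⟨c, hc⟩ := exists_eqOn_add_or_eqOn_neg_add ha hb hlip hext
  have hiA : (fun x => f x i) '' M ⊆ A := by
    rintro _ ⟨x, hx, rfl⟩
    exact hfA (mem_image_of_mem f hx) i
  refine ⟨c, hc.imp ?_ ?_⟩ <;> exact fun h => h.image_eq ▸ hiA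

section Baton

variable {lam : ℕ → ℝ} {k : ℕ}

lemma baton_subset_Icc (hlam : ∀ j < k, 0 ≤ lam j) :
    baton lam k ⊆ Icc 0 (∑ j ∈ Finset.range k, lam j) := by
  rintro _ ⟨r, hr, rfl⟩
  have hlam' : ∀ j ∈ Finset.range k, 0 ≤ lam j := fun j hj => hlam j (Finset.mem_range.1 hj)
  exact ⟨Finset.sum_nonneg fun j hj => hlam' j (Finset.range_subset_range.2 hr hj),
    Finset.sum_le_sum_of_subset_of_nonneg (Finset.range_subset_range.2 hr) fun j hj _ => hlam' j hj⟩

lemma isLeast_baton (hlam : ∀ j < k, 0 ≤ lam j) : IsLeast (baton lam k) 0 :=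
  ⟨⟨0, mem_Iic.2 k.zero_le, Finset.sum_range_zero lam⟩, fun _ hx => (baton_subset_Icc hlam hx).1⟩

lemma isGreatest_baton (hlam : ∀ j < k, 0 ≤ lam j) :
    IsGreatest (baton lam k) (∑ j ∈ Finset.range k, lam j) :=
  ⟨⟨k, mem_Iic.2 le_rfl, rfl⟩, fun _ hx => (baton_subset_Icc hlam hx).2⟩

end Baton

theorem power_baton_free_iff_general (k : ℕ) (lam : ℕ → ℝ)
    (hpos : ∀ j < k, 0 < lam j) (n : ℕ) (hn : 0 < n) (A : Set ℝ) :
    ¬ HasCopy (baton lam k) {x : Fin n → ℝ | ∀ i, x i ∈ A}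
    ↔ ∀ x : ℝ, ¬ ((fun s => s + x) '' baton lam k ⊆ A) ∧
               ¬ ((fun s => -s + x) '' baton lam k ⊆ A) := by
  have : Nonempty (Fin n) := ⟨⟨0, hn⟩⟩
  have hlam : ∀ j < k, 0 ≤ lam j := fun j hj => (hpos j hj).le
  simp only [← not_or, ← not_exists, not_iff_not]
  exact ⟨fun h => h.exists_translate_subset_of_pi (isLeast_baton hlam) (isGreatest_baton hlam),
    fun ⟨_, hc⟩ => (hasCopy_of_translate_subset hc).pi_const⟩

/-- For a baton `B = B(λ₁,…,λ_k)` and any `A ⊆ ℝ`, the power `A^n ⊆ ℝ^n` (max metric)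
contains no isometric copy of `B` iff `A` is `B`-tr-free, i.e. `A` contains neither
`B + x` nor `−B + x` for any `x ∈ ℝ`. -/
theorem power_baton_free_iff (k : ℕ) (hk : 0 < k) (lam : ℕ → ℝ)
    (hpos : ∀ j < k, 0 < lam j) (n : ℕ) (hn : 0 < n) (A : Set ℝ) :
    ¬ HasCopy (baton lam k) {x : Fin n → ℝ | ∀ i, x i ∈ A}
    ↔ ∀ x : ℝ, ¬ ((fun s => s + x) '' baton lam k ⊆ A) ∧
               ¬ ((fun s => -s + x) '' baton lam k ⊆ A) :=
  power_baton_free_iff_general k lam hpos n hn A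
end

section
/- Let k ∈ ℕ, let λ_1, …, λ_k be positive integers, and set B = B(λ_1,…,λ_k). Then for all n ∈ ℕ, χ(ℝ^n_∞, B) ≥ d(ℤ, B)^{−n}. -/
open Set Filter

/-- The chromatic number of `ℝ^n` with the max-norm metric and forbidden subspace `M`. -/
noncomputable def chrom {α : Type*} [MetricSpace α] (M : Set α) (n : ℕ) : ℕ :=
  sInf {N : ℕ | ∃ c : (Fin n → ℝ) → Fin N, ∀ i : Fin N, ¬ HasCopy M {x | c x = i}}

/-- The integer baton `B(λ₁,…,λ_k)`: the set of partial sums `σ₀,…,σ_k`. -/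
def batonZ (lam : ℕ → ℤ) (k : ℕ) : Set ℤ :=
  (fun r => ∑ j ∈ Finset.range r, lam j) '' Set.Iic k

/-- `A ⊆ ℤ` is `S`-tr-free: it contains no translate of `S` and no translate of `-S`. -/
def TrFreeZ (S A : Set ℤ) : Prop :=
  ∀ x : ℤ, ¬ ((fun s => s + x) '' S ⊆ A) ∧ ¬ ((fun s => -s + x) '' S ⊆ A)

/-- The upper density of a set of integers. -/
noncomputable def upperDensity (A : Set ℤ) : ℝ :=
  Filter.limsup
    (fun N : ℕ => ((A ∩ Set.Icc (-(N : ℤ)) (N : ℤ)).ncard : ℝ) / (2 * N + 1)) Filter.atTop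

/-- `d(ℤ, S)`: the supremum of upper densities of `S`-tr-free subsets of `ℤ`. -/
noncomputable def densZ (S : Set ℤ) : ℝ :=
  sSup (upperDensity '' {A : Set ℤ | TrFreeZ S A})

/-!
Fix a colouring with `χ` colours and a colour class inside the grid `{0,…,L-1}ⁿ`. For each
coordinate `j`, `x <ⱼ y :⇔ xⱼ < yⱼ ∧ ‖x - y‖∞ ≤ yⱼ - xⱼ` is a strict order on whose chains the
`j`-th coordinate projection is an isometry, so a chain of a `B`-free class projects onto a
`B`-tr-free subset of `{0,…,L-1}`. Extending such a set periodically with period `L + s` (`s` the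
length of `B`) keeps it tr-free, so it has at most `d(ℤ,B)(L + s)` elements. Any two distinct
points are comparable in one of the `n` orders, hence the `n` chain heights of a point determine
it, and a class has at most `(d(ℤ,B)(L + s))ⁿ` grid points. Thus `Lⁿ ≤ χ (d(ℤ,B)(L + s))ⁿ`, and
`L → ∞` gives `1 ≤ χ d(ℤ,B)ⁿ`.
-/

theorem HasCopy.mono {α β : Type*} [MetricSpace α] [MetricSpace β] {M : Set α} {A B : Set β}
    (h : HasCopy M A) (hAB : A ⊆ B) : HasCopy M B :=
  let ⟨f, hf, hfA⟩ := h
  ⟨f, hf, hfA.trans hAB⟩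

theorem HasCopy.of_image {α β γ : Type*} [MetricSpace α] [MetricSpace β] [MetricSpace γ]
    [Nonempty β] {M : Set α} {C : Set β} {π : β → γ}
    (hπ : ∀ x ∈ C, ∀ y ∈ C, dist (π x) (π y) = dist x y)
    (h : HasCopy M (π '' C)) : HasCopy M C := by
  obtain ⟨f, hf, hfC⟩ := h
  have hmem : ∀ u ∈ M, ∃ x ∈ C, π x = f u := fun u hu => hfC ⟨u, hu, rfl⟩
  refine ⟨Function.invFunOn π C ∘ f, fun u hu v hv => ?_, ?_⟩
  · rw [Function.comp_apply, Function.comp_apply,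
      ← hπ _ (Function.invFunOn_mem (hmem u hu)) _ (Function.invFunOn_mem (hmem v hv)),
      Function.invFunOn_eq (hmem u hu),
      Function.invFunOn_eq (hmem v hv), hf u hu v hv]
  · rintro _ ⟨u, hu, rfl⟩
    exact Function.invFunOn_mem (hmem u hu)

theorem trFreeZ_iff {S A : Set ℤ} :
    TrFreeZ S A ↔ ∀ x : ℤ, ¬ (∀ t ∈ S, t + x ∈ A) ∧ ¬ (∀ t ∈ S, -t + x ∈ A) := by
  simp only [TrFreeZ, Set.subset_def, Set.forall_mem_image]

theorem trFreeZ_of_not_hasCopy {S T : Set ℤ}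
    (h : ¬ HasCopy ((fun z : ℤ => (z : ℝ)) '' S) ((fun z : ℤ => (z : ℝ)) '' T)) :
    TrFreeZ S T := by
  refine trFreeZ_iff.2 fun x => ⟨fun hx => h ?_, fun hx => h ?_⟩
  · refine ⟨fun u => u + x, fun _ _ _ _ => dist_add_right _ _ _, ?_⟩
    rintro _ ⟨_, ⟨t, ht, rfl⟩, rfl⟩
    exact ⟨t + x, hx t ht, by push_cast; rfl⟩
  · refine ⟨fun u => -u + x, fun _ _ _ _ => by rw [dist_add_right, dist_neg_neg], ?_⟩
    rintro _ ⟨_, ⟨t, ht, rfl⟩, rfl⟩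
    exact ⟨-t + x, hx t ht, by push_cast; rfl⟩

/-- Since `a % P < L`, the shift by `P * (a / P)` moves the window `[a, a + s]` into `[0, P)`,
where reduction mod `P` is the identity. -/
theorem sub_mul_ediv_mem_of_emod_mem {F : Set ℤ} {L s P : ℕ} (hF : F ⊆ Ico 0 (L : ℤ))
    (hLP : L + s ≤ P) {a e : ℤ} (ha : a % P ∈ F) (he : e % P ∈ F) (hae : a ≤ e)
    (hea : e ≤ a + s) : e - P * (a / P) ∈ F := by
  have ha' := hF ha
  have hdecomp := Int.emod_add_mul_ediv a P
  simp only [Set.mem_Ico] at ha'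
  rwa [← Int.emod_eq_of_lt (a := e - P * (a / P)) (b := P) (by omega) (by omega),
    Int.sub_mul_emod_self_left]

theorem trFreeZ_setOf_emod_mem {S F : Set ℤ} {L s P : ℕ} (hS : S ⊆ Icc 0 (s : ℤ))
    (h0 : 0 ∈ S) (hs : (s : ℤ) ∈ S) (hLP : L + s ≤ P) (hF : F ⊆ Ico 0 (L : ℤ))
    (hFS : TrFreeZ S F) : TrFreeZ S {z | z % P ∈ F} := by
  rw [trFreeZ_iff] at hFS ⊢
  intro x
  constructor
  · intro hx
    apply (hFS (x - P * (x / P))).1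
    intro t ht
    have hx0 : x % P ∈ F := by simpa using hx 0 h0
    have := sub_mul_ediv_mem_of_emod_mem hF hLP hx0 (hx t ht) (by linarith [(hS ht).1])
      (by linarith [(hS ht).2])
    rwa [add_sub_assoc] at this
  · intro hx
    apply (hFS (x - P * ((-s + x) / P))).2
    intro t ht
    have := sub_mul_ediv_mem_of_emod_mem hF hLP (hx s hs) (hx t ht) (by linarith [(hS ht).2])
      (by linarith [(hS ht).1])
    rwa [add_sub_assoc] at this

theorem ncard_inter_Icc_le (A : Set ℤ) (N : ℕ) :
    ((A ∩ Icc (-(N : ℤ)) N).ncard : ℝ) ≤ 2 * N + 1 := by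
  have h := Set.ncard_le_ncard (Set.inter_subset_right (s := A)) (Set.finite_Icc (-(N : ℤ)) N)
  rw [← Finset.coe_Icc, Set.ncard_coe_finset, Int.card_Icc] at h
  exact_mod_cast h.trans (by omega)

theorem isBoundedUnder_density (A : Set ℤ) :
    IsBoundedUnder (· ≤ ·) atTop
      fun N : ℕ => ((A ∩ Icc (-(N : ℤ)) N).ncard : ℝ) / (2 * N + 1) :=
  isBoundedUnder_of ⟨1, fun N => (div_le_one (by positivity)).2 (ncard_inter_Icc_le A N)⟩

theorem upperDensity_le_one (A : Set ℤ) : upperDensity A ≤ 1 :=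
  limsup_le_of_le (isCoboundedUnder_le_of_le atTop fun N => by positivity)
    (Eventually.of_forall fun N => (div_le_one (by positivity)).2 (ncard_inter_Icc_le A N))

theorem le_densZ {S A : Set ℤ} (h : TrFreeZ S A) : upperDensity A ≤ densZ S :=
  le_csSup ⟨1, by rintro _ ⟨B, -, rfl⟩; exact upperDensity_le_one B⟩ ⟨A, h, rfl⟩

theorem densZ_nonneg {S : Set ℤ} (hS : S.Nonempty) : 0 ≤ densZ S := by
  have hfree : TrFreeZ S ∅ := fun x =>
    ⟨fun h => h ⟨_, hS.some_mem, rfl⟩, fun h => h ⟨_, hS.some_mem, rfl⟩⟩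
  simpa [upperDensity] using le_densZ hfree

theorem two_mul_mul_card_le_ncard {P : ℕ} (hP : 0 < P) {F : Finset ℤ}
    (hF : ↑F ⊆ Ico 0 (P : ℤ)) (q : ℕ) :
    2 * q * F.card ≤
      ({z : ℤ | z % P ∈ F} ∩ Icc (-((P * q : ℕ) : ℤ)) ((P * q : ℕ) : ℤ)).ncard := by
  have hy : ∀ y ∈ F, 0 ≤ y ∧ y < P := fun y hy => hF hy
  have hmod : ∀ y ∈ F, ∀ i : ℤ, (y + P * i) % P = y := fun y hyF i => by
    rw [Int.add_mul_emod_self_left, Int.emod_eq_of_lt (hy y hyF).1 (hy y hyF).2]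
  have hcard : (((Finset.Ico (-(q : ℤ)) q) ×ˢ F : Finset (ℤ × ℤ)) : Set (ℤ × ℤ)).ncard =
      2 * q * F.card := by
    rw [Set.ncard_coe_finset, Finset.card_product, Int.card_Ico]
    congr 1
    omega
  rw [← hcard]
  refine Set.ncard_le_ncard_of_injOn (fun p => p.2 + P * p.1) ?_ ?_ (Set.toFinite _)
  · rintro ⟨i, y⟩ hiy
    simp only [Finset.coe_product, Set.mem_prod, Finset.coe_Ico, Set.mem_Ico,
      Finset.mem_coe] at hiy
    obtain ⟨⟨hi₁, hi₂⟩, hyF⟩ := hiy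
    obtain ⟨hy₁, hy₂⟩ := hy y hyF
    refine ⟨by simpa [hmod y hyF i] using hyF, ?_, ?_⟩ <;> push_cast <;> nlinarith
  · rintro ⟨i, y⟩ hiy ⟨i', y'⟩ hiy' h
    simp only [Finset.coe_product, Set.mem_prod, Finset.mem_coe] at hiy hiy' h
    have hyy : y = y' := by rw [← hmod y hiy.2 i, h, hmod y' hiy'.2 i']
    subst hyy
    rw [mul_left_cancel₀ (by positivity : (P : ℤ) ≠ 0) (add_left_cancel h)]

theorem card_div_le_upperDensity {P : ℕ} (hP : 0 < P) {F : Finset ℤ} (hF : ↑F ⊆ Ico 0 (P : ℤ)) :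
    (F.card : ℝ) / P ≤ upperDensity {z : ℤ | z % P ∈ F} := by
  set g : ℕ → ℝ := fun q => (F.card / P : ℝ) * (q / (q + (2 * P : ℝ)⁻¹))
  have hg : Tendsto g atTop (nhds (F.card / P : ℝ)) := by
    simpa only [mul_one] using
      (tendsto_natCast_div_add_atTop ((2 * P : ℝ)⁻¹)).const_mul (F.card / P : ℝ)
  have hPR : (0 : ℝ) < P := by exact_mod_cast hP
  have hg_le : ∀ q : ℕ, g q ≤ (({z : ℤ | z % P ∈ F} ∩
      Icc (-((P * q : ℕ) : ℤ)) ((P * q : ℕ) : ℤ)).ncard : ℝ) / (2 * (P * q : ℕ) + 1) := by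
    intro q
    have hcount := two_mul_mul_card_le_ncard hP hF q
    have hgq : g q = ((2 * q * F.card : ℕ) : ℝ) / (2 * (P * q : ℕ) + 1) := by
      simp only [g]
      push_cast
      field_simp
    rw [hgq]
    gcongr
  refine le_of_forall_lt_imp_le_of_dense fun c hc =>
    le_limsup_of_frequently_le ?_ (isBoundedUnder_density _)
  exact (tendsto_id.const_mul_atTop' hP).frequently
    ((hg.eventually (lt_mem_nhds hc)).mono fun q hq => hq.le.trans (hg_le q)).frequently

theorem card_le_densZ_mul {S : Set ℤ} {s L : ℕ} (hS : S ⊆ Icc 0 (s : ℤ)) (h0 : 0 ∈ S)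
    (hs : (s : ℤ) ∈ S) (hL : 0 < L) {F : Finset ℤ} (hF : ↑F ⊆ Ico 0 (L : ℤ))
    (hFS : TrFreeZ S F) : (F.card : ℝ) ≤ densZ S * ((L : ℝ) + s) := by
  have hFP : (F : Set ℤ) ⊆ Ico 0 ((L + s : ℕ) : ℤ) :=
    hF.trans (Set.Ico_subset_Ico_right (by push_cast; omega))
  have := (card_div_le_upperDensity (by omega) hFP).trans
    (le_densZ (trFreeZ_setOf_emod_mem hS h0 hs le_rfl hF hFS))
  rwa [div_le_iff₀ (by positivity), Nat.cast_add] at this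

section Cone

variable {ι : Type*} [Fintype ι]

def ConeLT (j : ι) (x y : ι → ℝ) : Prop :=
  x j < y j ∧ dist x y ≤ y j - x j

theorem ConeLT.trans {j : ι} {x y z : ι → ℝ} (hxy : ConeLT j x y) (hyz : ConeLT j y z) :
    ConeLT j x z :=
  ⟨hxy.1.trans hyz.1, (dist_triangle x y z).trans (by linarith [hxy.2, hyz.2])⟩

theorem ConeLT.irrefl (j : ι) (x : ι → ℝ) : ¬ ConeLT j x x :=
  fun h => lt_irrefl _ h.1

theorem exists_dist_eq_dist_apply_s14 {x y : ι → ℝ} (h : x ≠ y) :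
    ∃ j, dist x y = dist (x j) (y j) := by
  by_contra! hne
  have hlt : ∀ j, dist (x j) (y j) < dist x y :=
    fun j => (dist_le_pi_dist x y j).lt_of_ne (hne j).symm
  exact lt_irrefl _ ((dist_pi_lt_iff (dist_pos.2 h)).2 hlt)

theorem exists_coneLT_of_ne {x y : ι → ℝ} (h : x ≠ y) : ∃ j, ConeLT j x y ∨ ConeLT j y x := by
  obtain ⟨j, hj⟩ := exists_dist_eq_dist_apply_s14 h
  rw [Real.dist_eq] at hj
  refine ⟨j, ?_⟩
  rcases lt_trichotomy (x j) (y j) with hlt | heq | hgt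
  · exact Or.inl ⟨hlt, by rw [hj, abs_sub_comm, abs_of_pos (sub_pos.2 hlt)]⟩
  · exact absurd (dist_eq_zero.1 (by rw [hj, heq, sub_self, abs_zero])) h
  · exact Or.inr ⟨hgt, by rw [dist_comm, hj, abs_of_pos (sub_pos.2 hgt)]⟩

theorem IsChain.dist_eq_dist_apply {j : ι} {C : Set (ι → ℝ)} (hC : IsChain (ConeLT j) C)
    {x y : ι → ℝ} (hx : x ∈ C) (hy : y ∈ C) : dist x y = dist (x j) (y j) := by
  rcases eq_or_ne x y with rfl | hxy
  · simp
  refine le_antisymm ?_ (dist_le_pi_dist x y j)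
  rw [Real.dist_eq]
  rcases hC hx hy hxy with h | h
  · exact h.2.trans ((neg_sub (x j) (y j)).symm ▸ neg_le_abs _)
  · rw [dist_comm]; exact h.2.trans (le_abs_self _)

end Cone

section Height

variable {α : Type*} (r : α → α → Prop)

open Classical in
noncomputable def heightIn (D : Finset α) (p : α) : ℕ :=
  (D.powerset.filter fun C : Finset α => IsChain r (C : Set α) ∧ ∀ x ∈ C, r x p).sup Finset.card

variable {r}

theorem le_heightIn {D C : Finset α} {p : α} (hCD : C ⊆ D) (hC : IsChain r (C : Set α))
    (hCp : ∀ x ∈ C, r x p) : C.card ≤ heightIn r D p := by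
  classical
  exact Finset.le_sup (f := Finset.card) (Finset.mem_filter.2 ⟨Finset.mem_powerset.2 hCD, hC, hCp⟩)

theorem exists_isChain_card_eq_heightIn_add_one (hirr : ∀ a, ¬ r a a) {D : Finset α} {p : α}
    (hp : p ∈ D) : ∃ C ⊆ D, IsChain r (C : Set α) ∧ (∀ x ∈ C, x = p ∨ r x p) ∧
      C.card = heightIn r D p + 1 := by
  classical
  obtain ⟨C, hC, hCmax⟩ := Finset.exists_mem_eq_sup
    (D.powerset.filter fun C : Finset α => IsChain r (C : Set α) ∧ ∀ x ∈ C, r x p)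
    ⟨∅, Finset.mem_filter.2 ⟨Finset.empty_mem_powerset D, by simp [IsChain]⟩⟩ Finset.card
  obtain ⟨hCD, hCchain, hCp⟩ := by simpa only [Finset.mem_filter, Finset.mem_powerset] using hC
  have hpC : p ∉ C := fun h => hirr p (hCp p h)
  refine ⟨insert p C, Finset.insert_subset hp hCD, ?_, ?_, ?_⟩
  · rw [Finset.coe_insert]
    exact hCchain.insert fun b hb _ => Or.inr (hCp b hb)
  · intro x hx
    rcases Finset.mem_insert.1 hx with rfl | hx
    exacts [Or.inl rfl, Or.inr (hCp x hx)]
  · rw [Finset.card_insert_of_notMem hpC, heightIn, hCmax]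

theorem heightIn_lt_heightIn (htrans : ∀ a b c, r a b → r b c → r a c) (hirr : ∀ a, ¬ r a a)
    {D : Finset α} {p q : α} (hp : p ∈ D) (hpq : r p q) : heightIn r D p < heightIn r D q := by
  obtain ⟨C, hCD, hC, hCp, hcard⟩ := exists_isChain_card_eq_heightIn_add_one hirr hp
  have := le_heightIn hCD hC fun x hx => (hCp x hx).elim (· ▸ hpq) (htrans _ _ _ · hpq)
  omega

theorem heightIn_lt (hirr : ∀ a, ¬ r a a) {D : Finset α} {p : α} (hp : p ∈ D) {t : ℕ}
    (ht : ∀ C ⊆ D, IsChain r (C : Set α) → C.card ≤ t) : heightIn r D p < t := by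
  obtain ⟨C, hCD, hC, -, hcard⟩ := exists_isChain_card_eq_heightIn_add_one hirr hp
  have := ht C hCD hC
  omega

end Height

theorem Finset.card_le_pow_of_isChain {α ι : Type*} [Fintype ι] (r : ι → α → α → Prop)
    (htrans : ∀ i a b c, r i a b → r i b c → r i a c) (hirr : ∀ i a, ¬ r i a a)
    {D : Finset α} (hcomp : ∀ p ∈ D, ∀ q ∈ D, p ≠ q → ∃ i, r i p q ∨ r i q p) {t : ℕ}
    (ht : ∀ i, ∀ C ⊆ D, IsChain (r i) (C : Set α) → C.card ≤ t) :
    D.card ≤ t ^ Fintype.card ι := by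
  classical
  have hmaps : Set.MapsTo (fun p i => heightIn (r i) D p) D
      ((Fintype.piFinset fun _ : ι => Finset.range t : Finset (ι → ℕ)) : Set (ι → ℕ)) :=
    fun p hp => Fintype.mem_piFinset.2 fun i => Finset.mem_range.2 (heightIn_lt (hirr i) hp (ht i))
  have hinj : Set.InjOn (fun p i => heightIn (r i) D p) D := by
    intro p hp q hq hpq
    by_contra hne
    obtain ⟨i, h | h⟩ := hcomp p hp q hq hne
    · exact (heightIn_lt_heightIn (htrans i) (hirr i) hp h).ne (congrFun hpq i)
    · exact (heightIn_lt_heightIn (htrans i) (hirr i) hq h).ne (congrFun hpq i).symm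
  simpa using Finset.card_le_card_of_injOn _ hmaps hinj

section Grid

variable {ι : Type*} [Fintype ι] {S : Set ℤ}

theorem trFreeZ_image_of_isChain {A : Set (ι → ℝ)}
    (hA : ¬ HasCopy ((fun z : ℤ => (z : ℝ)) '' S) A) {C : Set (ι → ℤ)}
    (hCA : ∀ p ∈ C, (fun i => (p i : ℝ)) ∈ A) {j : ι}
    (hC : IsChain (fun p q => ConeLT j (fun i => (p i : ℝ)) fun i => (q i : ℝ)) C) :
    TrFreeZ S ((fun p => p j) '' C) := by
  refine trFreeZ_of_not_hasCopy fun h => hA ?_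
  have hC' : IsChain (ConeLT j) ((fun p i => (p i : ℝ)) '' C) := by
    rintro _ ⟨p, hp, rfl⟩ _ ⟨q, hq, rfl⟩ hne
    exact hC hp hq fun h => hne (h ▸ rfl)
  rw [Set.image_image] at h
  refine (HasCopy.of_image (π := fun x => x j)
    (fun x hx y hy => (hC'.dist_eq_dist_apply hx hy).symm) ?_).mono ?_
  · rwa [Set.image_image]
  · rintro _ ⟨p, hp, rfl⟩
    exact hCA p hp

theorem card_le_pow_of_not_hasCopy {A : Set (ι → ℝ)}
    (hA : ¬ HasCopy ((fun z : ℤ => (z : ℝ)) '' S) A) {L t : ℕ}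
    (ht : ∀ T : Finset ℤ, ↑T ⊆ Ico 0 (L : ℤ) → TrFreeZ S T → T.card ≤ t)
    {D : Finset (ι → ℤ)} (hD : ∀ p ∈ D, ∀ i, p i ∈ Ico 0 (L : ℤ))
    (hDA : ∀ p ∈ D, (fun i => (p i : ℝ)) ∈ A) : D.card ≤ t ^ Fintype.card ι := by
  classical
  refine Finset.card_le_pow_of_isChain (fun j p q => ConeLT j (fun i => (p i : ℝ)) fun i => q i)
    (fun j _ _ _ => ConeLT.trans) (fun j _ => ConeLT.irrefl j _) ?_ ?_
  · intro p _ q _ hpq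
    exact exists_coneLT_of_ne fun h => hpq (funext fun i => Int.cast_injective (congrFun h i))
  · intro j C hCD hC
    have hinj : Set.InjOn (fun p : ι → ℤ => p j) C := by
      intro p hp q hq hpq
      by_contra hne
      rcases hC hp hq hne with h | h
      · exact h.1.ne (congrArg Int.cast hpq)
      · exact h.1.ne (congrArg Int.cast hpq.symm)
    rw [← Finset.card_image_of_injOn hinj]
    refine ht _ ?_ ?_
    · intro z hz
      obtain ⟨p, hp, rfl⟩ := Finset.mem_image.1 hz
      exact hD p (hCD hp) j
    · rw [Finset.coe_image]
      exact trFreeZ_image_of_isChain hA (fun p hp => hDA p (hCD hp)) hC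

theorem pow_le_mul_pow_of_coloring {N : ℕ} (c : (ι → ℝ) → Fin N)
    (hc : ∀ i, ¬ HasCopy ((fun z : ℤ => (z : ℝ)) '' S) {x | c x = i}) {L t : ℕ}
    (ht : ∀ T : Finset ℤ, ↑T ⊆ Ico 0 (L : ℤ) → TrFreeZ S T → T.card ≤ t) :
    L ^ Fintype.card ι ≤ N * t ^ Fintype.card ι := by
  classical
  set grid := Fintype.piFinset fun _ : ι => Finset.Ico 0 (L : ℤ)
  have hgrid : grid.card = L ^ Fintype.card ι := by simp [grid, Fintype.card_piFinset]
  have hfiber : ∀ i ∈ grid.image fun p => c fun j => (p j : ℝ),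
      (grid.filter fun p => (c fun j => (p j : ℝ)) = i).card ≤ t ^ Fintype.card ι :=
    fun i _ => card_le_pow_of_not_hasCopy (hc i) ht
      (fun p hp => by simpa [grid] using Fintype.mem_piFinset.1 (Finset.mem_filter.1 hp).1)
      fun p hp => (Finset.mem_filter.1 hp).2
  calc L ^ Fintype.card ι = grid.card := hgrid.symm
    _ ≤ t ^ Fintype.card ι * (grid.image fun p => c fun j => (p j : ℝ)).card :=
      Finset.card_le_mul_card_image _ _ hfiber
    _ ≤ t ^ Fintype.card ι * N := by
      gcongr
      simpa using Finset.card_le_univ (grid.image fun p => c fun j => (p j : ℝ))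
    _ = N * t ^ Fintype.card ι := mul_comm _ _

end Grid

theorem exists_coloring_dist_ne {ι : Type*} [Fintype ι] {r : ℝ} (hr : 0 < r) :
    ∃ N, ∃ c : (ι → ℝ) → Fin N, ∀ x y, c x = c y → dist x y ≠ r := by
  classical
  -- colour `x` by the parities of the `⌊x j / r⌋`: moving a coordinate by exactly `r` flips one
  refine ⟨_, fun x => Fintype.equivFin (ι → Bool) fun j => decide (Even ⌊x j / r⌋), ?_⟩
  intro x y hxy hdist
  obtain ⟨j, hj⟩ := exists_dist_eq_dist_apply_s14 (x := x) (y := y) fun h => by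
    rw [h, dist_self] at hdist; exact hr.ne hdist
  have hpar := congrFun ((Fintype.equivFin _).injective hxy) j
  rw [hdist, Real.dist_eq] at hj
  have hshift : y j / r = x j / r - 1 ∨ y j / r = x j / r + 1 := by
    rcases abs_cases (x j - y j) with ⟨h, -⟩ | ⟨h, -⟩
    · left; field_simp; linarith
    · right; field_simp; linarith
  rcases hshift with h | h <;>
    simp [h, Int.floor_sub_one, Int.floor_add_one, ← Int.not_even_iff_odd] at hpar

theorem exists_coloring_chrom {α : Type*} [MetricSpace α] {M : Set α} {a b : α} (ha : a ∈ M)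
    (hb : b ∈ M) (hab : a ≠ b) (n : ℕ) :
    ∃ c : (Fin n → ℝ) → Fin (chrom M n), ∀ i, ¬ HasCopy M {x | c x = i} := by
  obtain ⟨N, c, hc⟩ := exists_coloring_dist_ne (ι := Fin n) (dist_pos.2 hab)
  have hne : {N : ℕ | ∃ c : (Fin n → ℝ) → Fin N, ∀ i, ¬ HasCopy M {x | c x = i}}.Nonempty := by
    refine ⟨N, c, fun i ⟨f, hf, hfM⟩ => hc (f a) (f b) ?_ (hf a ha b hb)⟩
    exact (hfM ⟨a, ha, rfl⟩).trans (hfM ⟨b, hb, rfl⟩).symm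
  exact Nat.sInf_mem hne

section Baton

variable {lam : ℕ → ℤ} {k : ℕ}

theorem zero_mem_batonZ : 0 ∈ batonZ lam k :=
  ⟨0, Nat.zero_le k, Finset.sum_range_zero _⟩

theorem sum_range_mem_batonZ : ∑ j ∈ Finset.range k, lam j ∈ batonZ lam k :=
  ⟨k, Set.mem_Iic.2 le_rfl, rfl⟩

theorem batonZ_subset_Icc (hlam : ∀ j < k, 0 < lam j) :
    batonZ lam k ⊆ Icc 0 (∑ j ∈ Finset.range k, lam j) := by
  rintro _ ⟨r, hr, rfl⟩
  have hr : r ≤ k := hr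
  refine ⟨Finset.sum_nonneg fun j hj => (hlam j ?_).le,
    Finset.sum_le_sum_of_subset_of_nonneg (Finset.range_mono hr) fun j hj _ =>
      (hlam j (Finset.mem_range.1 hj)).le⟩
  exact (Finset.mem_range.1 hj).trans_le hr

theorem sum_range_pos (hk : 0 < k) (hlam : ∀ j < k, 0 < lam j) :
    0 < ∑ j ∈ Finset.range k, lam j :=
  Finset.sum_pos (fun j hj => hlam j (Finset.mem_range.1 hj)) (Finset.nonempty_range_iff.2 hk.ne')

end Baton

theorem inv_pow_le_of_forall_pow_le {N d s : ℝ} {n : ℕ} (hN : 0 ≤ N) (hs : 0 ≤ s)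
    (h : ∀ L : ℕ, 0 < L → (L : ℝ) ^ n ≤ N * (d * (L + s)) ^ n) : d⁻¹ ^ n ≤ N := by
  have hlim : Tendsto (fun L : ℕ => ((L : ℝ) / (L + s)) ^ n) atTop (nhds 1) := by
    simpa using (tendsto_natCast_div_add_atTop s).pow n
  have hone : 1 ≤ N * d ^ n := by
    refine le_of_tendsto hlim (eventually_atTop.2 ⟨1, fun L hL => ?_⟩)
    have hLs : (0 : ℝ) < L + s := by
      have : (1 : ℝ) ≤ L := by exact_mod_cast hL
      linarith
    rw [div_pow, div_le_iff₀ (by positivity)]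
    calc (L : ℝ) ^ n ≤ N * (d * (L + s)) ^ n := h L hL
      _ = N * d ^ n * (L + s) ^ n := by rw [mul_pow, mul_assoc]
  rwa [inv_pow, inv_le_iff_one_le_mul₀ (pos_of_mul_pos_right (one_pos.trans_le hone) hN)]

theorem chi_int_baton_lower_general (k : ℕ) (hk : 0 < k) (lam : ℕ → ℤ)
    (hlam : ∀ j < k, 0 < lam j) (n : ℕ) :
    (densZ (batonZ lam k))⁻¹ ^ n ≤ (chrom ((fun z : ℤ => (z : ℝ)) '' batonZ lam k) n : ℝ) := by
  obtain ⟨s, hs⟩ : ∃ s : ℕ, (s : ℤ) = ∑ j ∈ Finset.range k, lam j :=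
    ⟨_, Int.toNat_of_nonneg (sum_range_pos hk hlam).le⟩
  have hs_pos : 0 < s := by have := sum_range_pos hk hlam; omega
  have hsub : batonZ lam k ⊆ Icc 0 (s : ℤ) := hs ▸ batonZ_subset_Icc hlam
  have hs_mem : (s : ℤ) ∈ batonZ lam k := hs ▸ sum_range_mem_batonZ
  obtain ⟨c, hc⟩ := exists_coloring_chrom (mem_image_of_mem _ zero_mem_batonZ)
    (mem_image_of_mem _ hs_mem) ((Int.cast_injective (α := ℝ)).ne (by omega)) n
  have hd : 0 ≤ densZ (batonZ lam k) := densZ_nonneg ⟨0, zero_mem_batonZ⟩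
  refine inv_pow_le_of_forall_pow_le (Nat.cast_nonneg _) (Nat.cast_nonneg s) fun L hL => ?_
  have hgrid := pow_le_mul_pow_of_coloring c hc (L := L) fun T hT hTS =>
    Nat.le_floor (card_le_densZ_mul hsub zero_mem_batonZ hs_mem hL hT hTS)
  rw [Fintype.card_fin] at hgrid
  calc (L : ℝ) ^ n
      _ ≤ chrom ((fun z : ℤ => (z : ℝ)) '' batonZ lam k) n *
          (⌊densZ (batonZ lam k) * ((L : ℝ) + s)⌋₊ : ℝ) ^ n := mod_cast hgrid
      _ ≤ _ := by gcongr; exact Nat.floor_le (by positivity)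

/-- For an integer baton `B`, `χ(ℝ^n_∞, B) ≥ d(ℤ, B)^(−n)` for all `n`. -/
theorem chi_int_baton_lower (k : ℕ) (hk : 0 < k) (lam : ℕ → ℤ)
    (hlam : ∀ j < k, 0 < lam j) (n : ℕ) (hn : 0 < n) :
    (densZ (batonZ lam k))⁻¹ ^ n ≤ (chrom ((fun z : ℤ => (z : ℝ)) '' batonZ lam k) n : ℝ) :=
  chi_int_baton_lower_general k hk lam hlam n
end

section
/- Let m, n be positive integers and let X ⊆ (ℤ/mℤ)^n be a nonempty set. Then the additive group (ℤ/mℤ)^n can be covered by at most m^n·(1 + ln|X|)/|X| translates of X; that is, there exist elements x_1, …, x_r ∈ (ℤ/mℤ)^n with r ≤ m^n·(1 + ln|X|)/|X| such that (X + x_1) ∪ ⋯ ∪ (X + x_r) = (ℤ/mℤ)^n. -/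
/-!
Greedy covering. Put `A = |G| / |X|`. Averaging over all translates, some translate of `X`
meets a set `U` of uncovered points in at least `|U| / A` points, and in at least one point
when `U` is nonempty. The potential `φ(u) = u` for `u ≤ A`, `φ(u) = A (1 + ln (u / A))`
for `u ≥ A` has slope `min 1 (A / u)`, so removing these points lowers `φ` by at least `1`.
Hence `U` is covered by at most `φ(|U|)` translates, and `φ(|G|) = A (1 + ln |X|)`.
-/

open Finset Real
open scoped Pointwise

noncomputable def coverPotential (A x : ℝ) : ℝ := if x ≤ A then x else A * (1 + log (x / A))

theorem coverPotential_zero {A : ℝ} (hA : 0 ≤ A) : coverPotential A 0 = 0 := by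
  simp [coverPotential, hA]

theorem coverPotential_mul {A K : ℝ} (hA : 0 < A) (hK : 1 ≤ K) :
    coverPotential A (A * K) = A * (1 + log K) := by
  unfold coverPotential
  split_ifs with h
  · obtain rfl : K = 1 := le_antisymm (by nlinarith) hK
    simp
  · rw [mul_div_cancel_left₀ K hA.ne']

theorem sub_mul_min_le_coverPotential_sub {A u v : ℝ} (hA : 0 < A) (hvu : v ≤ u) :
    (u - v) * min 1 (A / u) ≤ coverPotential A u - coverPotential A v := by
  unfold coverPotential
  by_cases hu : u ≤ A
  · rw [if_pos hu, if_pos (hvu.trans hu)]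
    exact mul_le_of_le_one_right (by linarith) (min_le_left _ _)
  have hu0 : 0 < u := by linarith
  have hmin : min 1 (A / u) = A / u := min_eq_right ((div_le_one hu0).2 (by linarith))
  have hlog : 1 - A / u ≤ log (u / A) := by
    simpa only [inv_div] using one_sub_inv_le_log_of_pos (div_pos hu0 hA)
  rw [if_neg hu, hmin]
  by_cases hvA : v ≤ A
  · rw [if_pos hvA]
    have hgap : A * (1 + (1 - A / u)) - v - (u - v) * (A / u) = (u - A) * (A - v) / u := by
      field_simp; ring
    have : 0 ≤ (u - A) * (A - v) / u := by
      have := le_of_not_ge hu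
      exact div_nonneg (mul_nonneg (by linarith) (by linarith)) hu0.le
    linarith [mul_le_mul_of_nonneg_left hlog hA.le]
  · have hv0 : 0 < v := by linarith
    have hlog' : 1 - v / u ≤ log (u / v) := by
      simpa only [inv_div] using one_sub_inv_le_log_of_pos (div_pos hu0 hv0)
    have hdiff : A * (1 + log (u / A)) - A * (1 + log (v / A)) = A * log (u / v) := by
      rw [log_div hu0.ne' hA.ne', log_div hv0.ne' hA.ne', log_div hu0.ne' hv0.ne']; ring
    rw [if_neg hvA, hdiff]
    calc (u - v) * (A / u) = A * (1 - v / u) := by field_simp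
      _ ≤ A * log (u / v) := mul_le_mul_of_nonneg_left hlog' hA.le

theorem coverPotential_add_one_le {A u v : ℝ} (hA : 0 < A) (hv : 0 ≤ v) (h1 : 1 ≤ u - v)
    (hfrac : u ≤ A * (u - v)) : coverPotential A v + 1 ≤ coverPotential A u := by
  have hu0 : 0 < u := by linarith
  have hslope := sub_mul_min_le_coverPotential_sub hA (show v ≤ u by linarith)
  suffices 1 ≤ (u - v) * min 1 (A / u) by linarith
  rcases min_cases 1 (A / u) with ⟨h, -⟩ | ⟨h, -⟩ <;> rw [h]
  · rwa [mul_one]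
  · rw [mul_div_assoc', le_div_iff₀ hu0]; linarith

namespace Finset

variable {G : Type*} [AddGroup G] [DecidableEq G] [Fintype G]

theorem sum_addConvolution (A B : Finset G) : ∑ x, A.addConvolution B x = #A * #B := by
  rw [← card_product, card_eq_sum_card_fiberwise (f := fun ab ↦ ab.1 + ab.2) (t := univ)
    (fun _ _ ↦ mem_univ _)]
  rfl

theorem sum_card_inter_vadd (U X : Finset G) : ∑ x : G, #(U ∩ (x +ᵥ X)) = #U * #X := by
  simp only [card_inter_vadd, sum_addConvolution, card_neg]

theorem exists_card_mul_le_card_inter_vadd (U X : Finset G) :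
    ∃ x : G, #U * #X ≤ Fintype.card G * #(U ∩ (x +ᵥ X)) := by
  obtain ⟨x, -, hx⟩ := exists_le_of_sum_le (s := univ) (f := fun _ ↦ #U * #X)
    (g := fun x ↦ Fintype.card G * #(U ∩ (x +ᵥ X))) univ_nonempty (by
      rw [sum_const, ← mul_sum, sum_card_inter_vadd, card_univ, smul_eq_mul])
  exact ⟨x, hx⟩

theorem exists_subset_add_card_le_coverPotential {X : Finset G} (hX : X.Nonempty)
    (U : Finset G) :
    ∃ s : Finset G, U ⊆ s + X ∧ (#s : ℝ) ≤ coverPotential (Fintype.card G / #X) #U := by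
  have hA : (0 : ℝ) < Fintype.card G / #X := by
    have : Nonempty G := ⟨hX.choose⟩
    have := hX.card_pos
    positivity
  induction U using Finset.strongInduction with
  | H U ih =>
  rcases U.eq_empty_or_nonempty with rfl | hU
  · exact ⟨∅, empty_subset _, by simp [coverPotential_zero hA.le]⟩
  obtain ⟨x, hx⟩ := exists_card_mul_le_card_inter_vadd U X
  set T := x +ᵥ X
  have hhit : 0 < #(U ∩ T) :=
    Nat.pos_of_mul_pos_left ((Nat.mul_pos hU.card_pos hX.card_pos).trans_le hx)
  obtain ⟨s, hUs, hs⟩ := ih (U \ T)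
    (sdiff_inter_self_left U T ▸ sdiff_ssubset inter_subset_left (card_pos.1 hhit))
  refine ⟨insert x s, fun y hy ↦ ?_, ?_⟩
  · by_cases hyT : y ∈ T
    · exact vadd_finset_subset_add (mem_insert_self x s) hyT
    · exact add_subset_add_right (subset_insert x s) (hUs (mem_sdiff.2 ⟨hy, hyT⟩))
  · have hgain : (#U : ℝ) - #(U \ T) = #(U ∩ T) := by
      rw [← card_sdiff_add_card_inter U T]; push_cast; ring
    have hstep := coverPotential_add_one_le hA (Nat.cast_nonneg #(U \ T)) (u := #U)
      (by rw [hgain]; exact_mod_cast hhit) (by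
        rw [hgain, div_mul_eq_mul_div, le_div_iff₀ (by positivity)]
        exact_mod_cast hx)
    calc (#(insert x s) : ℝ) ≤ #s + 1 := by exact_mod_cast card_insert_le x s
      _ ≤ _ := by linarith

end Finset

theorem cover_by_translates_general (m n : ℕ) (hm : 0 < m)
    (X : Finset (Fin n → ZMod m)) (hX : X.Nonempty) :
    ∃ (r : ℕ) (t : Fin r → (Fin n → ZMod m)),
      (r : ℝ) ≤ (m : ℝ) ^ n * ((1 + Real.log (X.card : ℝ)) / (X.card : ℝ)) ∧
      ∀ y : Fin n → ZMod m, ∃ i : Fin r, ∃ z ∈ X, y = z + t i := by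
  have : NeZero m := ⟨hm.ne'⟩
  set N : ℝ := (Fintype.card (Fin n → ZMod m) : ℝ)
  have hN : N = (m : ℝ) ^ n := by simp [N]
  have hK : (0 : ℝ) < #X := by exact_mod_cast hX.card_pos
  have hpot : coverPotential (N / #X) N = N * ((1 + Real.log #X) / #X) := by
    have := coverPotential_mul (A := N / #X) (by simp [N, hK, hm])
      (Nat.one_le_cast.2 hX.card_pos)
    rwa [div_mul_cancel₀ _ hK.ne', div_mul_eq_mul_div, mul_div_assoc] at this
  obtain ⟨s, hcover, hs⟩ := exists_subset_add_card_le_coverPotential hX univ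
  rw [card_univ, hpot, hN] at hs
  refine ⟨#s, fun i ↦ s.equivFin.symm i, hs, fun y ↦ ?_⟩
  obtain ⟨x, hx, z, hz, rfl⟩ := mem_add.1 (hcover (mem_univ y))
  exact ⟨s.equivFin ⟨x, hx⟩, z, hz, by simp [add_comm]⟩

/-- Erdős–Rogers-type covering: for a nonempty `X ⊆ (ℤ/mℤ)^n`, the group `(ℤ/mℤ)^n`
can be covered by at most `m^n (1 + ln|X|)/|X|` translates of `X`. -/
theorem cover_by_translates (m n : ℕ) (hm : 0 < m) (hn : 0 < n)
    (X : Finset (Fin n → ZMod m)) (hX : X.Nonempty) :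
    ∃ (r : ℕ) (t : Fin r → (Fin n → ZMod m)),
      (r : ℝ) ≤ (m : ℝ) ^ n * ((1 + Real.log (X.card : ℝ)) / (X.card : ℝ)) ∧
      ∀ y : Fin n → ZMod m, ∃ i : Fin r, ∃ z ∈ X, y = z + t i :=
  cover_by_translates_general m n hm X hX
end

section
/- Let k ≥ 2 and let m, n ∈ ℕ with m ≤ n. Let g : {0,1,…,k}^m → {0,1,…,k}^n be an isometry (a distance-preserving map with respect to the max-norm metrics) and put t = ⌊k/2⌋. Then there exists z ∈ {0,1,…,k}^m such that g(z) ∈ {0,1,…,k}^n has at least m coordinates equal to t. -/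
open Set Filter

/-- `{0,1,…,k}^m ⊆ ℝ^m` with the max metric. -/
def box (m k : ℕ) : Set (Fin m → ℝ) :=
  {x | ∀ i, ∃ j : ℕ, j ≤ k ∧ x i = (j : ℝ)}

/-!
Let `t = ⌊k/2⌋` and let `P i e` be the point with `i`-th coordinate `e` and all other
coordinates `t`. The images of `P i 0` and `P i k` are at distance `k`, so some coordinate
`σ i` of `{0,…,k}^n` takes the values `0` and `k` on them. For `i ≠ j` the points `P i _` and
`P j _` are at distance at most `k - t < k`, which forces `σ` to be injective. Finally, choose
the `i`-th coordinate of `z` to be `t` or `k - t` so that `z` lies within `t` of whichever of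
`P i 0`, `P i k` is sent to `0` at `σ i` and within `k - t` of the other one; then
`g z (σ i) = t` for every `i`.
-/

section Pi

variable {ι : Type*} [Fintype ι] [DecidableEq ι] {β : ι → Type*} [∀ i, PseudoMetricSpace (β i)]

theorem dist_update_update_same (x : ∀ i, β i) (i : ι) (a b : β i) :
    dist (Function.update x i a) (Function.update x i b) = dist a b := by
  refine le_antisymm ((dist_pi_le_iff dist_nonneg).2 fun j => ?_) ?_
  · rcases eq_or_ne j i with rfl | hj
    · simp
    · simp [hj]
  · simpa using dist_le_pi_dist (Function.update x i a) (Function.update x i b) i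

theorem dist_update_le {x y : ∀ i, β i} {i : ι} {e : β i} {r : ℝ} (hr : 0 ≤ r)
    (hi : dist (x i) e ≤ r) (hne : ∀ j ≠ i, dist (x j) (y j) ≤ r) :
    dist x (Function.update y i e) ≤ r := by
  refine (dist_pi_le_iff hr).2 fun j => ?_
  rcases eq_or_ne j i with rfl | hj
  · simpa using hi
  · simpa [hj] using hne j hj

end Pi

theorem endpoints_of_dist_eq {r a b : ℝ} (ha : a ∈ Icc 0 r) (hb : b ∈ Icc 0 r)
    (h : dist a b = r) : a = 0 ∧ b = r ∨ a = r ∧ b = 0 := by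
  rw [Real.dist_eq] at h
  obtain ⟨ha₀, ha₁⟩ := ha
  obtain ⟨hb₀, hb₁⟩ := hb
  rcases abs_cases (a - b) with ⟨hab, -⟩ | ⟨hab, -⟩
  · right; constructor <;> linarith
  · left; constructor <;> linarith

section Box

variable {m k : ℕ}

theorem apply_mem_Icc_of_mem_box {x : Fin m → ℝ} (hx : x ∈ box m k) (i : Fin m) :
    x i ∈ Icc 0 (k : ℝ) := by
  obtain ⟨j, hj, hxj⟩ := hx i
  rw [hxj]
  exact ⟨j.cast_nonneg, by exact_mod_cast hj⟩

theorem update_mem_box {x : Fin m → ℝ} (hx : x ∈ box m k) (i : Fin m) {j : ℕ} (hj : j ≤ k) :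
    Function.update x i (j : ℝ) ∈ box m k := by
  intro l
  rcases eq_or_ne l i with rfl | hl
  · exact ⟨j, hj, by simp⟩
  · simpa [hl] using hx l

theorem exists_apply_endpoints_of_dist_eq {x y : Fin m → ℝ} (hx : x ∈ box m k)
    (hy : y ∈ box m k) (hk : 0 < k) (h : dist x y = k) :
    ∃ s, x s = 0 ∧ y s = k ∨ x s = k ∧ y s = 0 := by
  obtain ⟨⟨s, hs⟩, -⟩ := (dist_pi_eq_iff (by exact_mod_cast hk)).1 h
  exact ⟨s, endpoints_of_dist_eq (apply_mem_Icc_of_mem_box hx s)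
    (apply_mem_Icc_of_mem_box hy s) hs⟩

end Box

section Isometry

variable {k m n : ℕ}

theorem one_le_half_and_two_mul_half_le (hk : 2 ≤ k) :
    (1 : ℝ) ≤ (k / 2 : ℕ) ∧ 2 * ((k / 2 : ℕ) : ℝ) ≤ k ∧ (k : ℝ) ≤ 2 * ((k / 2 : ℕ) : ℝ) + 1 := by
  refine ⟨?_, ?_, ?_⟩ <;> norm_cast <;> omega

/-- The point `P i e` of the proof sketch. -/
def axisPoint (k : ℕ) (i : Fin m) (e : ℝ) : Fin m → ℝ :=
  Function.update (fun _ => ((k / 2 : ℕ) : ℝ)) i e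

theorem axisPoint_mem_box (i : Fin m) {j : ℕ} (hj : j ≤ k) : axisPoint k i j ∈ box m k :=
  update_mem_box (fun _ => ⟨k / 2, Nat.div_le_self k 2, rfl⟩) i hj

theorem dist_axisPoint_axisPoint_le (hk : 2 ≤ k) {i j : Fin m} (hij : i ≠ j) {a b : ℝ}
    (ha : a ∈ Icc 0 (k : ℝ)) (hb : b ∈ Icc 0 (k : ℝ)) :
    dist (axisPoint k i a) (axisPoint k j b) ≤ k - (k / 2 : ℕ) := by
  obtain ⟨ht, h2t, -⟩ := one_le_half_and_two_mul_half_le hk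
  have near : ∀ c ∈ Icc 0 (k : ℝ), dist c (k / 2 : ℕ) ≤ k - (k / 2 : ℕ) := fun c hc => by
    rw [Real.dist_eq, abs_le]; constructor <;> linarith [hc.1, hc.2]
  refine dist_update_le (by linarith) ?_ fun l hl => ?_
  · simpa [axisPoint, hij.symm, dist_comm] using near b hb
  · rcases eq_or_ne l i with rfl | hli
    · simpa [axisPoint] using near a ha
    · rw [axisPoint, Function.update_of_ne hli, dist_self]; linarith

theorem axisPoint_mem_box_of_endpoint (i : Fin m) {e : ℝ} (he : e = 0 ∨ e = k) :
    axisPoint k i e ∈ box m k ∧ axisPoint k i (k - e) ∈ box m k := by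
  have h0 : axisPoint k i 0 ∈ box m k := by exact_mod_cast axisPoint_mem_box i (Nat.zero_le k)
  have hk := axisPoint_mem_box (k := k) i le_rfl
  rcases he with rfl | rfl <;> simp [h0, hk]

/-- The point `z` of the proof sketch, for the orientations `e i ∈ {0, k}`. -/
noncomputable def witness (k : ℕ) (e : Fin m → ℝ) : Fin m → ℝ :=
  fun i => if e i = 0 then (k / 2 : ℕ) else k - (k / 2 : ℕ)

theorem witness_mem_box (e : Fin m → ℝ) : witness k e ∈ box m k := by
  intro i
  by_cases hi : e i = 0
  · exact ⟨k / 2, Nat.div_le_self k 2, by simp [witness, hi]⟩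
  · exact ⟨k - k / 2, Nat.sub_le k _, by simp [witness, hi, Nat.cast_sub (Nat.div_le_self k 2)]⟩

theorem dist_witness_apply_half_le (hk : 2 ≤ k) (e : Fin m → ℝ) (i : Fin m) :
    dist (witness k e i) (k / 2 : ℕ) ≤ 1 := by
  obtain ⟨-, h2t, hk2t⟩ := one_le_half_and_two_mul_half_le hk
  unfold witness
  split_ifs
  · simp
  · rw [Real.dist_eq, abs_le]; constructor <;> linarith

theorem dist_witness_axisPoint_le (hk : 2 ≤ k) {e : Fin m → ℝ} (i : Fin m)
    (he : e i = 0 ∨ e i = k) :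
    dist (witness k e) (axisPoint k i (e i)) ≤ (k / 2 : ℕ) ∧
      dist (witness k e) (axisPoint k i (k - e i)) ≤ k - (k / 2 : ℕ) := by
  obtain ⟨ht, h2t, -⟩ := one_le_half_and_two_mul_half_le hk
  have hk0 : (k : ℝ) ≠ 0 := by norm_cast; omega
  have far (j) (_ : j ≠ i) := dist_witness_apply_half_le hk e j
  constructor <;> refine dist_update_le (by linarith) ?_ fun j hj => by linarith [far j hj]
  all_goals
    rcases he with he | he <;> simp [witness, he, hk0, Real.dist_eq, abs_le] <;> grind

def SeparatesAxis (g : (Fin m → ℝ) → (Fin n → ℝ)) (k : ℕ) (i : Fin m) (s : Fin n) (e : ℝ) :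
    Prop :=
  (e = 0 ∨ e = k) ∧ g (axisPoint k i e) s = 0 ∧ g (axisPoint k i (k - e)) s = k

variable {g : (Fin m → ℝ) → (Fin n → ℝ)}
  (hiso : ∀ x ∈ box m k, ∀ y ∈ box m k, dist (g x) (g y) = dist x y)
include hiso

theorem exists_separatesAxis (hmap : ∀ x ∈ box m k, g x ∈ box n k) (hk : 2 ≤ k) (i : Fin m) :
    ∃ s e, SeparatesAxis g k i s e := by
  have h0 : axisPoint k i 0 ∈ box m k := by exact_mod_cast axisPoint_mem_box i (Nat.zero_le k)
  have hK := axisPoint_mem_box (k := k) i le_rfl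
  have hdist : dist (g (axisPoint k i 0)) (g (axisPoint k i k)) = k := by
    rw [hiso _ h0 _ hK, axisPoint, axisPoint, dist_update_update_same, Real.dist_eq]
    simp
  obtain ⟨s, ⟨hs0, hsk⟩ | ⟨hsk, hs0⟩⟩ :=
    exists_apply_endpoints_of_dist_eq (hmap _ h0) (hmap _ hK) (by omega) hdist
  · exact ⟨s, 0, Or.inl rfl, hs0, by simpa using hsk⟩
  · exact ⟨s, k, Or.inr rfl, hs0, by simpa using hsk⟩

theorem injective_of_separatesAxis (hk : 2 ≤ k) {σ : Fin m → Fin n} {e : Fin m → ℝ}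
    (hσ : ∀ i, SeparatesAxis g k i (σ i) (e i)) : Function.Injective σ := by
  intro i j hij
  by_contra hne
  obtain ⟨hei, -, hik⟩ := hσ i
  obtain ⟨hej, hj0, -⟩ := hσ j
  have hfar := dist_le_pi_dist (g (axisPoint k i (k - e i))) (g (axisPoint k j (e j))) (σ i)
  rw [hik, hij, hj0, Real.dist_eq, sub_zero, abs_of_nonneg k.cast_nonneg,
    hiso _ (axisPoint_mem_box_of_endpoint i hei).2 _ (axisPoint_mem_box_of_endpoint j hej).1]
    at hfar
  have hnear := dist_axisPoint_axisPoint_le hk hne (a := k - e i) (b := e j)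
    (by rcases hei with h | h <;> simp [h]) (by rcases hej with h | h <;> simp [h])
  linarith [(one_le_half_and_two_mul_half_le hk).1]

theorem apply_witness_eq_half (hk : 2 ≤ k) {σ : Fin m → Fin n} {e : Fin m → ℝ}
    (hσ : ∀ i, SeparatesAxis g k i (σ i) (e i)) (i : Fin m) :
    g (witness k e) (σ i) = (k / 2 : ℕ) := by
  obtain ⟨he, h0, hK⟩ := hσ i
  have hboxes := axisPoint_mem_box_of_endpoint i he
  have hdist := dist_witness_axisPoint_le hk i he
  rw [← hiso _ (witness_mem_box e) _ hboxes.1, ← hiso _ (witness_mem_box e) _ hboxes.2] at hdist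
  have near0 := (dist_le_pi_dist _ _ (σ i)).trans hdist.1
  have nearK := (dist_le_pi_dist _ _ (σ i)).trans hdist.2
  rw [h0, Real.dist_eq, abs_le] at near0
  rw [hK, Real.dist_eq, abs_le] at nearK
  linarith [near0.2, nearK.1]

end Isometry

theorem isometry_middle_coords_general (k m n : ℕ) (hk : 2 ≤ k)
    (g : (Fin m → ℝ) → (Fin n → ℝ))
    (hmap : ∀ x ∈ box m k, g x ∈ box n k)
    (hiso : ∀ x ∈ box m k, ∀ y ∈ box m k, dist (g x) (g y) = dist x y) :
    ∃ z ∈ box m k, m ≤ {i : Fin n | g z i = ((k / 2 : ℕ) : ℝ)}.ncard := by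
  choose σ e hσ using exists_separatesAxis hiso hmap hk
  refine ⟨witness k e, witness_mem_box e, ?_⟩
  calc m = (range σ).ncard := by
        rw [← image_univ, ncard_image_of_injective _ (injective_of_separatesAxis hiso hk hσ),
          ncard_univ, Nat.card_eq_fintype_card, Fintype.card_fin]
    _ ≤ _ := ncard_le_ncard (range_subset_iff.2 (apply_witness_eq_half hiso hk hσ)) (toFinite _)

/-- If `k ≥ 2`, `m ≤ n`, and `g : {0,…,k}^m → {0,…,k}^n` is an isometry (max metrics),
then with `t = ⌊k/2⌋` there exists `z ∈ {0,…,k}^m` such that `g(z)` has at least `m`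
coordinates equal to `t`. -/
theorem isometry_middle_coords (k m n : ℕ) (hk : 2 ≤ k) (hm : 1 ≤ m) (hmn : m ≤ n)
    (g : (Fin m → ℝ) → (Fin n → ℝ))
    (hmap : ∀ x ∈ box m k, g x ∈ box n k)
    (hiso : ∀ x ∈ box m k, ∀ y ∈ box m k, dist (g x) (g y) = dist x y) :
    ∃ z ∈ box m k, m ≤ {i : Fin n | g z i = ((k / 2 : ℕ) : ℝ)}.ncard :=
  isometry_middle_coords_general k m n hk g hmap hiso
end

section
/- For every n ∈ ℕ and every unbounded metric space M, there exists a colouring of ℝ^n (equipped with the max-norm metric) with 2 colours such that no colour class contains an isometric copy of M. -/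
/-!
Fix base points `m₀ ∈ M` and `x₀ ∈ X`. Since `M` is unbounded there are points `p k ∈ M` whose
distances `D k = dist (p k) m₀` grow so fast that the closed annuli around `x₀` with radii in
`[D k - k, D k + k]` are pairwise disjoint. Colour the odd annuli `1` and everything else `0`.
An isometry `f` moves distances from the base points by at most `A = dist (f m₀) x₀`, so for
every `k ≥ A` the point `f (p k)` lies in the `k`-th annulus; its colour is the parity of `k`,
and both colours occur on the image of `f`.
-/

open Set Bornology

section Unbounded

variable {M : Type*} [PseudoMetricSpace M]

lemma exists_lt_dist_of_not_isBounded_univ (hM : ¬ IsBounded (univ : Set M)) (m₀ : M) (R : ℝ) :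
    ∃ m, R < dist m m₀ := by
  by_contra! h
  exact hM ((Metric.isBounded_iff_subset_closedBall m₀).2 ⟨R, fun m _ => h m⟩)

lemma exists_seq_dist_add_lt_dist_succ (hM : ¬ IsBounded (univ : Set M)) (m₀ : M) :
    ∃ p : ℕ → M, ∀ k : ℕ, dist (p k) m₀ + 2 * k + 1 < dist (p (k + 1)) m₀ := by
  choose g hg using exists_lt_dist_of_not_isBounded_univ hM m₀
  exact ⟨fun k => Nat.rec (g 0) (fun k pk => g (dist pk m₀ + 2 * k + 1)) k, fun k => hg _⟩

end Unbounded

lemma eq_of_abs_sub_le_of_abs_sub_le {D : ℕ → ℝ} (hD : ∀ k : ℕ, D k + 2 * k + 1 < D (k + 1))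
    {t : ℝ} {k j : ℕ} (hk : |t - D k| ≤ k) (hj : |t - D j| ≤ j) : k = j := by
  have hmono : StrictMono fun l : ℕ => D l - l := strictMono_nat_of_lt_succ fun l => by
    have := hD l
    have : (0 : ℝ) ≤ l := l.cast_nonneg
    push_cast
    linarith
  have hsep : ∀ {a b : ℕ}, a < b → D a + a < D b - b := fun {a b} hab => by
    have := hD a
    have := hmono.monotone (Nat.succ_le_of_lt hab)
    push_cast at this
    linarith
  rw [abs_le] at hk hj
  rcases lt_trichotomy k j with h | h | h
  · linarith [hsep h]
  · exact h
  · linarith [hsep h]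

section Colouring

variable {X : Type*} [PseudoMetricSpace X]

open scoped Classical in
noncomputable def annulusColouring (D : ℕ → ℝ) (x₀ : X) (x : X) : Fin 2 :=
  if ∃ j : ℕ, Odd j ∧ |dist x x₀ - D j| ≤ j then 1 else 0

lemma annulusColouring_eq_one_iff {D : ℕ → ℝ} (hD : ∀ k : ℕ, D k + 2 * k + 1 < D (k + 1))
    {x₀ x : X} {k : ℕ} (hx : |dist x x₀ - D k| ≤ k) : annulusColouring D x₀ x = 1 ↔ Odd k := by
  unfold annulusColouring
  split_ifs with h
  · obtain ⟨j, hj, hjx⟩ := h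
    simpa [eq_of_abs_sub_le_of_abs_sub_le hD hjx hx] using hj
  · exact iff_of_false zero_ne_one fun hk => h ⟨k, hk, hx⟩

end Colouring

lemma Isometry.abs_dist_sub_dist_le {M X : Type*} [PseudoMetricSpace M] [PseudoMetricSpace X]
    {f : M → X} (hf : Isometry f) (m m₀ : M) (x₀ : X) :
    |dist (f m) x₀ - dist m m₀| ≤ dist (f m₀) x₀ := by
  rw [← hf.dist_eq, dist_comm (f m) x₀, dist_comm (f m) (f m₀), dist_comm (f m₀) x₀]
  exact abs_dist_sub_le x₀ (f m₀) (f m)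

theorem exists_two_colouring_forall_not_isometry_range_subset {M X : Type*}
    [PseudoMetricSpace M] [PseudoMetricSpace X] (hM : ¬ IsBounded (univ : Set M)) (x₀ : X) :
    ∃ c : X → Fin 2, ∀ i : Fin 2, ¬ ∃ f : M → X, Isometry f ∧ range f ⊆ {x | c x = i} := by
  obtain ⟨m₀, -⟩ := nonempty_of_not_isBounded hM
  obtain ⟨p, hp⟩ := exists_seq_dist_add_lt_dist_succ hM m₀
  refine ⟨annulusColouring (fun k => dist (p k) m₀) x₀, fun i ⟨f, hf, hrange⟩ => ?_⟩
  obtain ⟨N, hN⟩ := exists_nat_ge (dist (f m₀) x₀)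
  have hcolour : ∀ k : ℕ, N ≤ k →
      (annulusColouring (fun k => dist (p k) m₀) x₀ (f (p k)) = 1 ↔ Odd k) := fun k hk =>
    annulusColouring_eq_one_iff hp <|
      (hf.abs_dist_sub_dist_le _ _ _).trans (hN.trans (Nat.cast_le.2 hk))
  have hi : ∀ k, annulusColouring (fun k => dist (p k) m₀) x₀ (f (p k)) = i :=
    fun k => hrange (mem_range_self (p k))
  fin_cases i
  · have := (hcolour (2 * N + 1) (by omega)).2 (odd_two_mul_add_one N)
    exact one_ne_zero (this.symm.trans (hi _))
  · exact (Nat.not_odd_iff_even.2 (even_two_mul N)) ((hcolour (2 * N) (by omega)).1 (hi _))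

/-- For every `n` and every unbounded metric space `M`, there is a `2`-colouring of
`ℝ^n` (max metric) such that no colour class contains an isometric copy of `M`. -/
theorem two_colouring_unbounded (n : ℕ) (M : Type*) [MetricSpace M]
    (hM : ∀ R : ℝ, 0 < R → ∃ x y : M, R < dist x y) :
    ∃ c : (Fin n → ℝ) → Fin 2, ∀ i : Fin 2,
      ¬ ∃ f : M → (Fin n → ℝ), Isometry f ∧ Set.range f ⊆ {x | c x = i} := by
  refine exists_two_colouring_forall_not_isometry_range_subset (fun hb => ?_) 0
  obtain ⟨C, hC⟩ := Metric.isBounded_iff.1 hb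
  obtain ⟨x, y, hxy⟩ := hM (max C 1) (by positivity)
  exact (le_max_left C 1).not_gt (hxy.trans_le (hC (mem_univ x) (mem_univ y)))
end
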